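/- Let a_1,…,a_d be positive integers and let W := {(k_1/a_1, …, k_d/a_d) mod ℤ^d : 0 ≤ k_i ≤ a_i − 1 for all i} ⊂ 𝕋^d; assume W is invariant under A. Set δ₀ := min(ε_c, (min_{x≠y∈W} d(x,y))/(1 + ‖A‖)). Let 𝓡 be a Markov partition for A of diameter δ < δ₀, with symbolic representation π : Ω → 𝕋^d, and let 𝓡₀ be the set of indices i such that R_i contains a point of W. Then: (i) for every i ∈ 𝓡₀ there exists a unique j ∈ 𝓡₀ with 𝒜_{ij} = 1; (ii) W = {π(ω) : ω ∈ Ω and ω_k ∈ 𝓡₀ for all k ∈ ℤ}. -/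

import Mathlib

noncomputable section

open scoped BigOperators

/-- The integer lattice `ℤ^d` inside `ℝ^d`. -/
def intLattice (d : ℕ) : AddSubgroup (Fin d → ℝ) :=
  AddSubgroup.pi Set.univ fun _ => AddSubgroup.zmultiples (1 : ℝ)

/-- The torus `𝕋^d = ℝ^d / ℤ^d`. -/
abbrev Torus (d : ℕ) := (Fin d → ℝ) ⧸ intLattice d

/-- The natural projection `p : ℝ^d → 𝕋^d`. -/
def Tproj (d : ℕ) : (Fin d → ℝ) →+ Torus d := QuotientAddGroup.mk' (intLattice d)

/-- The real matrix obtained from an integer matrix. -/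
def matR {d : ℕ} (A : Matrix (Fin d) (Fin d) ℤ) : Matrix (Fin d) (Fin d) ℝ :=
  A.map (Int.cast : ℤ → ℝ)

lemma intLattice_mapsTo {d : ℕ} (A : Matrix (Fin d) (Fin d) ℤ) :
    intLattice d ≤ (intLattice d).comap (matR A).mulVecLin.toAddMonoidHom := by
  intro x hx
  rw [AddSubgroup.mem_comap]
  rw [intLattice, AddSubgroup.mem_pi] at hx ⊢
  intro i _
  rw [AddSubgroup.mem_zmultiples_iff]
  choose k hk using fun j => AddSubgroup.mem_zmultiples_iff.mp (hx j (Set.mem_univ j))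
  have hx' : ∀ j, (k j : ℝ) = x j := by
    intro j
    have := hk j
    rwa [zsmul_eq_mul, mul_one] at this
  refine ⟨∑ j, A i j * k j, ?_⟩
  rw [zsmul_eq_mul, mul_one]
  have : (matR A).mulVecLin.toAddMonoidHom x i = ∑ j, (A i j : ℝ) * x j := by
    simp [matR, Matrix.mulVecLin_apply, Matrix.mulVec, dotProduct]
  rw [this]
  push_cast
  exact Finset.sum_congr rfl fun j _ => by rw [hx' j]

/-- The map on the torus induced by an integer matrix. -/
def tmap {d : ℕ} (A : Matrix (Fin d) (Fin d) ℤ) : Torus d →+ Torus d :=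
  QuotientAddGroup.map (intLattice d) (intLattice d)
    (matR A).mulVecLin.toAddMonoidHom (intLattice_mapsTo A)

/-- `iterZ A B k` is the `k`-th power (`k ∈ ℤ`) of the toral automorphism induced by `A`,
where `B` is the integer inverse of `A`. -/
def iterZ {d : ℕ} (A B : Matrix (Fin d) (Fin d) ℤ) (k : ℤ) (x : Torus d) : Torus d :=
  if 0 ≤ k then (⇑(tmap A))^[k.toNat] x else (⇑(tmap B))^[(-k).toNat] x

/-- The quotient "metric" on the torus induced by a norm `N` on `ℝ^d`. -/
def qdist {d : ℕ} (N : (Fin d → ℝ) → ℝ) (x y : Torus d) : ℝ :=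
  sInf (N '' {v | Tproj d v = x - y})

/-- A norm on `ℝ^d` adapted to the hyperbolic matrix `A` (with integer inverse `B`),
together with the stable/unstable splitting. -/
structure AdaptedNorm (d : ℕ) (A B : Matrix (Fin d) (Fin d) ℤ) where
  N : (Fin d → ℝ) → ℝ
  Es : Submodule ℝ (Fin d → ℝ)
  Eu : Submodule ℝ (Fin d → ℝ)
  compl : IsCompl Es Eu
  EsInvA : ∀ v ∈ Es, (matR A).mulVec v ∈ Es
  EuInvA : ∀ v ∈ Eu, (matR A).mulVec v ∈ Eu
  EsInvB : ∀ v ∈ Es, (matR B).mulVec v ∈ Es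
  EuInvB : ∀ v ∈ Eu, (matR B).mulVec v ∈ Eu
  nonneg : ∀ v, 0 ≤ N v
  eq_zero_iff : ∀ v, N v = 0 ↔ v = 0
  norm_smul : ∀ (c : ℝ) (v), N (c • v) = |c| * N v
  triangle : ∀ v w, N (v + w) ≤ N v + N w
  adapted : ∀ vs ∈ Es, ∀ vu ∈ Eu, N (vs + vu) = max (N vs) (N vu)
  lam : ℝ
  lam_nonneg : 0 ≤ lam
  lam_lt_one : lam < 1
  contract_s : ∀ v ∈ Es, N ((matR A).mulVec v) ≤ lam * N v
  contract_u : ∀ v ∈ Eu, N ((matR B).mulVec v) ≤ lam * N v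
  cA : ℝ
  cB : ℝ
  boundA : ∀ v, N ((matR A).mulVec v) ≤ cA * N v
  boundB : ∀ v, N ((matR B).mulVec v) ≤ cB * N v

/-- Hyperbolicity: no complex eigenvalue of modulus 1. -/
def IsHyperbolic {d : ℕ} (A : Matrix (Fin d) (Fin d) ℤ) : Prop :=
  ∀ z : ℂ, ((A.map (Int.cast : ℤ → ℂ)).charpoly).IsRoot z → ‖z‖ ≠ 1

/-- Local stable set `W^s_ε(x)` for the toral map induced by `A`
(taking `A` to be the inverse matrix gives the local unstable set). -/
def Wstable {d : ℕ} (A : Matrix (Fin d) (Fin d) ℤ) (N : (Fin d → ℝ) → ℝ) (ε : ℝ)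
    (x : Torus d) : Set (Torus d) :=
  {y | ∀ n : ℕ, qdist N ((⇑(tmap A))^[n] x) ((⇑(tmap A))^[n] y) ≤ ε}

/-- A rectangle: a set of diameter at most `ε` stable under the local product `[x,y]`. -/
def IsRectangle {d : ℕ} (A B : Matrix (Fin d) (Fin d) ℤ) (N : (Fin d → ℝ) → ℝ) (ε : ℝ)
    (R : Set (Torus d)) : Prop :=
  (∀ x ∈ R, ∀ y ∈ R, qdist N x y ≤ ε) ∧
  (∀ x ∈ R, ∀ y ∈ R, ∀ z, z ∈ Wstable A N ε x ∩ Wstable B N ε y → z ∈ R)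

/-- A Markov partition for the toral automorphism induced by `A` (with inverse `B`). -/
structure IsMarkovPartition {d m : ℕ} (A B : Matrix (Fin d) (Fin d) ℤ)
    (N : (Fin d → ℝ) → ℝ) (ε : ℝ) (R : Fin m → Set (Torus d)) : Prop where
  cover : (⋃ i, R i) = Set.univ
  rect : ∀ i, IsRectangle A B N ε (R i)
  proper : ∀ i, R i = closure (interior (R i))
  disj : ∀ i j, i ≠ j → interior (R i) ∩ interior (R j) = ∅
  markov_s : ∀ i j, ∀ x ∈ interior (R i), tmap A x ∈ interior (R j) →
      (⇑(tmap A)) '' (Wstable A N ε x ∩ R i) ⊆ Wstable A N ε (tmap A x) ∩ R j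
  markov_u : ∀ i j, ∀ x ∈ interior (R i), tmap A x ∈ interior (R j) →
      Wstable B N ε (tmap A x) ∩ R j ⊆ (⇑(tmap A)) '' (Wstable B N ε x ∩ R i)

/-- The adjacency relation of a Markov partition: `𝒜_{ij} = 1` iff
`int(R_i) ∩ A⁻¹(int(R_j)) ≠ ∅`. -/
def adjacent {d m : ℕ} (A : Matrix (Fin d) (Fin d) ℤ) (R : Fin m → Set (Torus d))
    (i j : Fin m) : Prop :=
  (interior (R i) ∩ (⇑(tmap A)) ⁻¹' interior (R j)).Nonempty

/-- The shift space `Ω` of bi-infinite admissible sequences. -/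
def shiftSpace {d m : ℕ} (A : Matrix (Fin d) (Fin d) ℤ) (R : Fin m → Set (Torus d)) :
    Set (ℤ → Fin m) :=
  {ω | ∀ k : ℤ, adjacent A R (ω k) (ω (k + 1))}

/-- The shift map `θ`. -/
def shiftMap {m : ℕ} (ω : ℤ → Fin m) : ℤ → Fin m := fun k => ω (k + 1)


/-- The finite set `W = {(k_1/a_1, …, k_d/a_d) mod ℤ^d}` of rational points of the torus. -/
def ratPoints (d : ℕ) (a : Fin d → ℤ) : Set (Torus d) :=
  {w | ∃ kv : Fin d → ℤ, w = Tproj d (fun i => (kv i : ℝ) / (a i : ℝ))}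


section Aux
variable {d : ℕ}

lemma tmap_mk (A : Matrix (Fin d) (Fin d) ℤ) (v : Fin d → ℝ) :
    tmap A (Tproj d v) = Tproj d ((matR A).mulVec v) :=
  QuotientAddGroup.map_mk' _ _ _ _ _

lemma matR_mul (A B : Matrix (Fin d) (Fin d) ℤ) : matR (A * B) = matR A * matR B := by
  simpa [matR] using Matrix.map_mul (L := A) (M := B) (f := Int.castRingHom ℝ)

lemma matR_one : matR (1 : Matrix (Fin d) (Fin d) ℤ) = 1 := by
  simpa [matR] using Matrix.map_one (1 : Matrix (Fin d) (Fin d) ℤ) (Int.castRingHom ℝ).map_zero (Int.castRingHom ℝ).map_one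

lemma tmap_tmap (A B : Matrix (Fin d) (Fin d) ℤ) (x : Torus d) :
    tmap A (tmap B x) = tmap (A * B) x := by
  induction x using QuotientAddGroup.induction_on with
  | H v => rw [show (QuotientAddGroup.mk v : Torus d) = Tproj d v from rfl,
      tmap_mk, tmap_mk, tmap_mk, matR_mul, Matrix.mulVec_mulVec]

lemma tmap_one (x : Torus d) : tmap (1 : Matrix (Fin d) (Fin d) ℤ) x = x := by
  induction x using QuotientAddGroup.induction_on with
  | H v => rw [show (QuotientAddGroup.mk v : Torus d) = Tproj d v from rfl, tmap_mk, matR_one,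
      Matrix.one_mulVec]

end Aux

section Aux2
variable {d : ℕ} {A B : Matrix (Fin d) (Fin d) ℤ}

lemma tmap_left_inv (hBA : B * A = 1) (x : Torus d) : tmap B (tmap A x) = x := by
  rw [tmap_tmap, hBA, tmap_one]

lemma tmap_injective (hBA : B * A = 1) : Function.Injective (⇑(tmap A) : Torus d → Torus d) :=
  Function.LeftInverse.injective (g := ⇑(tmap B)) (tmap_left_inv hBA)

lemma continuous_tmap (A : Matrix (Fin d) (Fin d) ℤ) : Continuous (⇑(tmap A) : Torus d → Torus d) := by
  have h1 : Continuous ((⇑(tmap A)) ∘ (QuotientAddGroup.mk : (Fin d → ℝ) → Torus d)) := by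
    have : ((⇑(tmap A)) ∘ (QuotientAddGroup.mk : (Fin d → ℝ) → Torus d))
        = (QuotientAddGroup.mk : (Fin d → ℝ) → Torus d) ∘ (matR A).mulVecLin := by
      funext v; exact tmap_mk A v
    rw [this]
    exact Continuous.comp continuous_quotient_mk' (matR A).mulVecLin.continuous_of_finiteDimensional
  exact (Topology.IsQuotientMap.continuous_iff (((QuotientAddGroup.isOpenMap_coe : IsOpenMap ((↑) : (Fin d → ℝ) → Torus d))).isQuotientMap
    continuous_quotient_mk' (fun q => (Quotient.exists_rep q).imp fun _ h => h))).mpr h1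

/-- `tmap A` as a homeomorphism, given the inverse matrix. -/
def tmapHomeo (A B : Matrix (Fin d) (Fin d) ℤ) (hAB : A * B = 1) (hBA : B * A = 1) :
    Torus d ≃ₜ Torus d where
  toFun := ⇑(tmap A)
  invFun := ⇑(tmap B)
  left_inv := tmap_left_inv hBA
  right_inv := tmap_left_inv hAB
  continuous_toFun := continuous_tmap A
  continuous_invFun := continuous_tmap B

end Aux2

section Qdist
variable {d : ℕ} {N : (Fin d → ℝ) → ℝ}

lemma lift_exists (x : Torus d) : ∃ v, Tproj d v = x :=
  QuotientAddGroup.mk'_surjective (intLattice d) x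

lemma liftset_nonempty (x y : Torus d) : (N '' {v | Tproj d v = x - y}).Nonempty := by
  obtain ⟨v, hv⟩ := lift_exists (x - y)
  exact ⟨N v, ⟨v, hv, rfl⟩⟩

lemma liftset_bdd (hnn : ∀ v, 0 ≤ N v) (x y : Torus d) :
    BddBelow (N '' {v | Tproj d v = x - y}) :=
  ⟨0, by rintro t ⟨v, -, rfl⟩; exact hnn v⟩

lemma qdist_nonneg (hnn : ∀ v, 0 ≤ N v) (x y : Torus d) : 0 ≤ qdist N x y :=
  le_csInf (liftset_nonempty x y) (by rintro t ⟨v, -, rfl⟩; exact hnn v)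

lemma qdist_le (hnn : ∀ v, 0 ≤ N v) {x y : Torus d} {v : Fin d → ℝ}
    (hv : Tproj d v = x - y) : qdist N x y ≤ N v :=
  csInf_le (liftset_bdd hnn x y) ⟨v, hv, rfl⟩

lemma exists_lift_lt (hnn : ∀ v, 0 ≤ N v) (x y : Torus d) {η : ℝ} (hη : 0 < η) :
    ∃ v, Tproj d v = x - y ∧ N v < qdist N x y + η := by
  obtain ⟨t, ⟨v, hv, rfl⟩, hlt⟩ := Real.lt_sInf_add_pos (liftset_nonempty (N := N) x y) hη
  exact ⟨v, hv, hlt⟩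

end Qdist

section Qdist2
variable {d : ℕ} {N : (Fin d → ℝ) → ℝ}

lemma qdist_triangle (hnn : ∀ v, 0 ≤ N v) (htri : ∀ v w, N (v + w) ≤ N v + N w)
    (x y z : Torus d) : qdist N x z ≤ qdist N x y + qdist N y z := by
  refine le_of_forall_pos_le_add fun η hη => ?_
  obtain ⟨u, hu, hu'⟩ := exists_lift_lt hnn x y (half_pos hη)
  obtain ⟨v, hv, hv'⟩ := exists_lift_lt hnn y z (half_pos hη)
  have huv : Tproj d (u + v) = x - z := by rw [map_add, hu, hv]; abel
  calc qdist N x z ≤ N (u + v) := qdist_le hnn huv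
    _ ≤ N u + N v := htri u v
    _ ≤ _ := by linarith

lemma qdist_lipschitz (hnn : ∀ v, 0 ≤ N v) {M : Matrix (Fin d) (Fin d) ℤ} {c : ℝ}
    (hc : 0 < c) (hb : ∀ v, N ((matR M).mulVec v) ≤ c * N v) (x y : Torus d) :
    qdist N (tmap M x) (tmap M y) ≤ c * qdist N x y := by
  refine le_of_forall_pos_le_add fun η hη => ?_
  obtain ⟨v, hv, hv'⟩ := exists_lift_lt hnn x y (div_pos hη hc)
  have hMv : Tproj d ((matR M).mulVec v) = tmap M x - tmap M y := by
    rw [← tmap_mk, hv, map_sub]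
  calc qdist N (tmap M x) (tmap M y) ≤ N ((matR M).mulVec v) := qdist_le hnn hMv
    _ ≤ c * N v := hb v
    _ ≤ c * (qdist N x y + η / c) := by nlinarith
    _ = c * qdist N x y + η := by field_simp

end Qdist2

section IterZ
variable {d : ℕ} {A B : Matrix (Fin d) (Fin d) ℤ}

lemma iterZ_zero (x : Torus d) : iterZ A B 0 x = x := by
  simp [iterZ]

lemma iterZ_succ (hAB : A * B = 1) (k : ℤ) (x : Torus d) :
    iterZ A B (k + 1) x = tmap A (iterZ A B k x) := by
  rcases le_or_gt 0 k with h | h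
  · have h1 : 0 ≤ k + 1 := by omega
    have h2 : (k + 1).toNat = k.toNat + 1 := by omega
    simp only [iterZ, if_pos h, if_pos h1, h2, Function.iterate_succ_apply']
  · rcases eq_or_lt_of_le (by omega : k + 1 ≤ 0) with h0 | h0
    · have hk : k = -1 := by omega
      subst hk
      have e1 : (-1 : ℤ) + 1 = 0 := by ring
      rw [e1, iterZ_zero]
      have : iterZ A B (-1) x = tmap B x := by
        simp [iterZ]
      rw [this, tmap_left_inv hAB]
    · have h1 : ¬ 0 ≤ k + 1 := by omega
      have h2 : ¬ 0 ≤ k := by omega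
      have h3 : (-k).toNat = (-(k+1)).toNat + 1 := by omega
      simp only [iterZ, if_neg h1, if_neg h2, h3, Function.iterate_succ_apply']
      rw [tmap_left_inv hAB]

lemma iterZ_pred (hAB : A * B = 1) (hBA : B * A = 1) (k : ℤ) (x : Torus d) :
    iterZ A B k x = tmap B (iterZ A B (k + 1) x) := by
  rw [iterZ_succ hAB, tmap_left_inv hBA]

end IterZ

section Rat
variable {d : ℕ} {a : Fin d → ℤ}

lemma Tproj_eq_iff {u v : Fin d → ℝ} : Tproj d u = Tproj d v ↔ u - v ∈ intLattice d := by
  rw [← sub_eq_zero, ← map_sub]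
  exact QuotientAddGroup.eq_zero_iff _

lemma mem_intLattice {v : Fin d → ℝ} : v ∈ intLattice d ↔ ∀ i, ∃ z : ℤ, (z : ℝ) = v i := by
  constructor
  · intro h i
    rw [intLattice, AddSubgroup.mem_pi] at h
    obtain ⟨z, hz⟩ := AddSubgroup.mem_zmultiples_iff.mp (h i (Set.mem_univ i))
    rw [zsmul_eq_mul, mul_one] at hz
    exact ⟨z, hz⟩
  · intro h
    rw [intLattice, AddSubgroup.mem_pi]
    intro i _
    obtain ⟨z, hz⟩ := h i
    refine AddSubgroup.mem_zmultiples_iff.mpr ⟨z, ?_⟩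
    rw [zsmul_eq_mul, mul_one]
    exact hz

lemma ratPoints_finite (ha : ∀ i, 0 < a i) : (ratPoints d a).Finite := by
  refine (Set.finite_range (fun k : ((i : Fin d) → Fin (a i).toNat) =>
      Tproj d fun i => ((k i : ℕ) : ℝ) / (a i : ℝ))).subset ?_
  rintro w ⟨kv, rfl⟩
  have hb : ∀ i, (kv i % a i).toNat < (a i).toNat := by
    intro i
    have h1 : 0 ≤ kv i % a i := Int.emod_nonneg _ (ne_of_gt (ha i))
    have h2 : kv i % a i < a i := Int.emod_lt_of_pos _ (ha i)
    omega
  refine ⟨fun i => ⟨(kv i % a i).toNat, hb i⟩, ?_⟩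
  rw [Tproj_eq_iff, mem_intLattice]
  intro i
  refine ⟨-(kv i / a i), ?_⟩
  have h1 : 0 ≤ kv i % a i := Int.emod_nonneg _ (ne_of_gt (ha i))
  have h2 : ((a i * (kv i / a i) + kv i % a i : ℤ) : ℝ) = (kv i : ℝ) := by
    exact_mod_cast congrArg (fun z : ℤ => (z : ℝ)) (Int.mul_ediv_add_emod (kv i) (a i))
  have hai : (a i : ℝ) ≠ 0 := by exact_mod_cast ne_of_gt (ha i)
  have h3 : (((kv i % a i).toNat : ℕ) : ℝ) = ((kv i % a i : ℤ) : ℝ) := by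
    exact_mod_cast congrArg (fun z : ℤ => (z : ℝ)) (Int.toNat_of_nonneg h1)
  rw [Pi.sub_apply]
  show _ = (((kv i % a i).toNat : ℕ) : ℝ) / (a i : ℝ) - (kv i : ℝ) / (a i : ℝ)
  rw [h3, div_sub_div_same, eq_div_iff hai]
  push_cast at h2 ⊢
  linarith

end Rat

section Winv2
variable {d : ℕ} {A B : Matrix (Fin d) (Fin d) ℤ} {a : Fin d → ℤ}

lemma ratPoints_B (hBA : B * A = 1) (ha : ∀ i, 0 < a i)
    (hWinv : ∀ w ∈ ratPoints d a, tmap A w ∈ ratPoints d a) :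
    ∀ w ∈ ratPoints d a, tmap B w ∈ ratPoints d a := by
  have hfin := ratPoints_finite (d := d) ha
  have hmaps : Set.MapsTo (⇑(tmap A)) (ratPoints d a) (ratPoints d a) := hWinv
  have hbij := (hfin.injOn_iff_bijOn_of_mapsTo hmaps).mp ((tmap_injective hBA).injOn)
  intro w hw
  obtain ⟨u, hu, hu2⟩ := hbij.surjOn hw
  have huw : tmap B w = u := by rw [← hu2, tmap_left_inv hBA]
  rw [huw]; exact hu

lemma iterZ_ratPoints (hAB : A * B = 1) (hBA : B * A = 1) (ha : ∀ i, 0 < a i)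
    (hWinv : ∀ w ∈ ratPoints d a, tmap A w ∈ ratPoints d a)
    (k : ℤ) {w : Torus d} (hw : w ∈ ratPoints d a) : iterZ A B k w ∈ ratPoints d a := by
  induction k using Int.induction_on with
  | zero => rw [iterZ_zero]; exact hw
  | succ n ih => rw [iterZ_succ hAB]; exact hWinv _ ih
  | pred n ih =>
      rw [iterZ_pred hAB hBA]
      have e : (-(n : ℤ) - 1) + 1 = -(n : ℤ) := by ring
      rw [e]
      exact ratPoints_B hBA ha hWinv _ ih

lemma exists_period (hBA : B * A = 1) (ha : ∀ i, 0 < a i)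
    (hWinv : ∀ w ∈ ratPoints d a, tmap A w ∈ ratPoints d a)
    {w : Torus d} (hw : w ∈ ratPoints d a) :
    ∃ P : ℕ, 0 < P ∧ (⇑(tmap A))^[P] w = w := by
  have horb : ∀ n : ℕ, (⇑(tmap A))^[n] w ∈ ratPoints d a := by
    intro n
    induction n with
    | zero => exact hw
    | succ n ih => rw [Function.iterate_succ_apply']; exact hWinv _ ih
  obtain ⟨b1, -, b2, -, hne, heq⟩ :=
    Set.infinite_univ.exists_ne_map_eq_of_mapsTo
      (f := fun n : ℕ => (⇑(tmap A))^[n] w) (fun n _ => horb n) (ratPoints_finite ha)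
  rcases hne.lt_or_gt with h | h
  · refine ⟨b2 - b1, by omega, ?_⟩
    have : (⇑(tmap A))^[b1] ((⇑(tmap A))^[b2 - b1] w) = (⇑(tmap A))^[b1] w := by
      rw [← Function.iterate_add_apply]
      have e : b1 + (b2 - b1) = b2 := by omega
      rw [e, heq]
    exact ((tmap_injective hBA).iterate b1) this
  · refine ⟨b1 - b2, by omega, ?_⟩
    have : (⇑(tmap A))^[b2] ((⇑(tmap A))^[b1 - b2] w) = (⇑(tmap A))^[b2] w := by
      rw [← Function.iterate_add_apply]
      have e : b2 + (b1 - b2) = b1 := by omega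
      rw [e, ← heq]
    exact ((tmap_injective hBA).iterate b2) this

end Winv2

section Shift
variable {d m : ℕ} {A : Matrix (Fin d) (Fin d) ℤ} {R : Fin m → Set (Torus d)}

lemma shiftMap_mem {ω : ℤ → Fin m} (hω : ω ∈ shiftSpace A R) : shiftMap ω ∈ shiftSpace A R :=
  fun k => hω (k + 1)

lemma shiftMap_iterate_mem {ω : ℤ → Fin m} (hω : ω ∈ shiftSpace A R) (n : ℕ) :
    (shiftMap^[n] ω) ∈ shiftSpace A R := by
  induction n with
  | zero => exact hω
  | succ n ih => rw [Function.iterate_succ_apply']; exact shiftMap_mem ih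

lemma shiftMap_iterate_apply (ω : ℤ → Fin m) (n : ℕ) (k : ℤ) :
    (shiftMap^[n] ω) k = ω (k + n) := by
  induction n generalizing ω with
  | zero => simp
  | succ n ih =>
      rw [Function.iterate_succ_apply, ih]
      show ω (k + n + 1) = ω (k + (n + 1))
      congr 1
      push_cast
      ring

lemma shiftMap_injective : Function.Injective (shiftMap (m := m)) := by
  intro ω ω' h
  funext k
  have := congrFun h (k - 1)
  simpa [shiftMap] using this

end Shift

section Topo
variable {d m : ℕ} {A B : Matrix (Fin d) (Fin d) ℤ} {R : Fin m → Set (Torus d)}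

lemma dense_interiors (hcover : (⋃ i, R i) = Set.univ)
    (hproper : ∀ i, R i = closure (interior (R i))) :
    Dense (⋃ j, interior (R j)) := by
  rw [dense_iff_closure_eq]
  refine Set.eq_univ_of_univ_subset ?_
  rw [← hcover]
  rintro p hp
  obtain ⟨_, ⟨j, rfl⟩, hj⟩ := hp
  have h1 : p ∈ closure (interior (R j)) := (hproper j) ▸ hj
  exact closure_mono (Set.subset_iUnion (fun j => interior (R j)) j) h1

lemma dense_preimage_tmap (hAB : A * B = 1) (hBA : B * A = 1) {S : Set (Torus d)}
    (hS : Dense S) (M : Matrix (Fin d) (Fin d) ℤ) (M' : Matrix (Fin d) (Fin d) ℤ)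
    (hMM' : M * M' = 1) (hM'M : M' * M = 1) :
    Dense ((⇑(tmap M) : Torus d → Torus d) ⁻¹' S) := by
  refine dense_iff_inter_open.mpr fun U hU hUne => ?_
  have h2 : IsOpen ((⇑(tmap M)) '' U) := (tmapHomeo M M' hMM' hM'M).isOpenMap U hU
  obtain ⟨p, hp1, hp2⟩ := dense_iff_inter_open.mp hS _ h2 (hUne.image _)
  obtain ⟨q, hq, rfl⟩ := hp1
  exact ⟨q, hq, hp2⟩

lemma step_point (hAB : A * B = 1) (hBA : B * A = 1)
    (hcover : (⋃ i, R i) = Set.univ)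
    (hproper : ∀ i, R i = closure (interior (R i)))
    (M M' : Matrix (Fin d) (Fin d) ℤ) (hMM' : M * M' = 1) (hM'M : M' * M = 1)
    (i : Fin m) {w : Torus d} (hw : w ∈ R i) :
    ∃ j, tmap M w ∈ R j ∧ ∃ x, x ∈ interior (R i) ∧ tmap M x ∈ interior (R j) := by
  classical
  have hclosed : ∀ j, IsClosed (R j) := fun j => (hproper j) ▸ isClosed_closure
  set V := (⋃ j ∈ {j : Fin m | tmap M w ∉ R j}, R j)ᶜ with hV
  have hVopen : IsOpen V :=
    isOpen_compl_iff.mpr (Set.Finite.isClosed_biUnion (Set.toFinite _) fun j _ => hclosed j)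
  have hwV : tmap M w ∈ V := by
    simp only [hV, Set.mem_compl_iff, Set.mem_iUnion]
    rintro ⟨j, hj1, hj2⟩
    exact hj1 hj2
  have hUopen : IsOpen (interior (R i) ∩ (⇑(tmap M)) ⁻¹' V) :=
    isOpen_interior.inter (hVopen.preimage (continuous_tmap M))
  have hUne : (interior (R i) ∩ (⇑(tmap M)) ⁻¹' V).Nonempty := by
    have hwcl : w ∈ closure (interior (R i)) := (hproper i) ▸ hw
    obtain ⟨x, hx1, hx2⟩ := (mem_closure_iff.mp hwcl) ((⇑(tmap M)) ⁻¹' V)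
      (hVopen.preimage (continuous_tmap M)) hwV
    exact ⟨x, hx2, hx1⟩
  have hdense : Dense ((⇑(tmap M) : Torus d → Torus d) ⁻¹' (⋃ j, interior (R j))) :=
    dense_preimage_tmap hAB hBA (dense_interiors hcover hproper) M M' hMM' hM'M
  obtain ⟨x, ⟨hxi, hxV⟩, hxD⟩ := hdense.inter_open_nonempty _ hUopen hUne
  obtain ⟨_, ⟨j, rfl⟩, hj⟩ := hxD
  refine ⟨j, ?_, x, hxi, hj⟩
  by_contra hcon
  have : tmap M x ∈ (⋃ j ∈ {j : Fin m | tmap M w ∉ R j}, R j) := by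
    refine Set.mem_biUnion hcon (interior_subset hj)
  exact hxV this

end Topo

section Path
variable {α G : Type*}

lemma build_path (adj : α → α → Prop) (P0 : α → Prop) (val : G → α)
    (hval : ∀ g, P0 (val g)) (σ p : G → G)
    (hσ : ∀ g, adj (val g) (val (σ g))) (hp : ∀ g, adj (val (p g)) (val g))
    (gi gj : G) (hij : adj (val gi) (val gj)) :
    ∃ ω : ℤ → α, (∀ k, adj (ω k) (ω (k + 1))) ∧ (∀ k, P0 (ω k)) ∧
      ω 0 = val gi ∧ ω 1 = val gj := by
  classical
  refine ⟨fun k => if k ≤ 0 then val (p^[(-k).toNat] gi) else val (σ^[(k - 1).toNat] gj),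
    ?_, ?_, ?_, ?_⟩
  · intro k
    by_cases hk : k + 1 ≤ 0
    · have hk0 : k ≤ 0 := by omega
      simp only [if_pos hk, if_pos hk0]
      have e : (-k).toNat = (-(k + 1)).toNat + 1 := by omega
      rw [e, Function.iterate_succ_apply']
      exact hp _
    · by_cases hk0 : k ≤ 0
      · have hke : k = 0 := by omega
        subst hke
        simp only [if_pos le_refl, if_neg hk]
        have e1 : ((0 : ℤ) + 1 - 1).toNat = 0 := by norm_num
        have e2 : (-(0 : ℤ)).toNat = 0 := by norm_num
        rw [e1, e2, Function.iterate_zero_apply, Function.iterate_zero_apply]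
        exact hij
      · simp only [if_neg hk, if_neg hk0]
        have e : (k + 1 - 1).toNat = (k - 1).toNat + 1 := by omega
        rw [e, Function.iterate_succ_apply']
        exact hσ _
  · intro k
    by_cases hk : k ≤ 0
    · simp only [if_pos hk]; exact hval _
    · simp only [if_neg hk]; exact hval _
  · simp
  · have h1 : ¬ (1 : ℤ) ≤ 0 := by norm_num
    simp only [if_neg h1]
    norm_num

end Path

section CA
variable {d : ℕ} {A B : Matrix (Fin d) (Fin d) ℤ}

lemma cA_pos (hd : 1 ≤ d) (hBA : B * A = 1) (𝔑 : AdaptedNorm d A B) : 0 < 𝔑.cA := by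
  set v : Fin d → ℝ := fun _ => 1 with hv
  have hvne : v ≠ 0 := by
    intro h
    have := congrFun h ⟨0, hd⟩
    simp [hv] at this
  have hNv : 0 < 𝔑.N v :=
    lt_of_le_of_ne (𝔑.nonneg v) (fun h => hvne ((𝔑.eq_zero_iff v).mp h.symm))
  have hAvne : (matR A).mulVec v ≠ 0 := by
    intro h
    apply hvne
    have h2 := congrArg ((matR B).mulVec) h
    rw [Matrix.mulVec_mulVec, ← matR_mul, hBA, matR_one, Matrix.one_mulVec,
      Matrix.mulVec_zero] at h2
    exact h2
  have hNAv : 0 < 𝔑.N ((matR A).mulVec v) :=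
    lt_of_le_of_ne (𝔑.nonneg _) (fun h => hAvne ((𝔑.eq_zero_iff _).mp h.symm))
  nlinarith [𝔑.boundA v]

end CA

/-- **Lemma 2.4 (Lemma `symbolic_W`)**: for a Markov partition of diameter `δ < δ₀`,
letting `𝓡₀` be the rectangles meeting `W`: (i) each `i ∈ 𝓡₀` has a unique successor
`j ∈ 𝓡₀` with `𝒜_{ij} = 1`; (ii) `W` is precisely the set of points coded by sequences all
of whose letters lie in `𝓡₀`. -/
theorem statement13
    (d : ℕ) (hd : 1 ≤ d)
    (A B : Matrix (Fin d) (Fin d) ℤ) (hAB : A * B = 1) (hBA : B * A = 1)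
    (hhyp : IsHyperbolic A)
    (𝔑 : AdaptedNorm d A B)
    (a : Fin d → ℤ) (ha : ∀ i, 0 < a i)
    (hWinv : ∀ w ∈ ratPoints d a, tmap A w ∈ ratPoints d a)
    (εc : ℝ) (hεc : 0 < εc)
    (hexp : ∀ x y : Torus d,
      (∀ k : ℤ, qdist 𝔑.N (iterZ A B k x) (iterZ A B k y) < εc) → x = y)
    (ε δ : ℝ) (hε : 0 < ε) (hδ : 0 < δ)
    (hδεc : δ < εc)
    (hδsep : ∀ w ∈ ratPoints d a, ∀ w' ∈ ratPoints d a, w ≠ w' →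
      δ * (1 + 𝔑.cA) < qdist 𝔑.N w w')
    (m : ℕ) (R : Fin m → Set (Torus d))
    (hR : IsMarkovPartition A B 𝔑.N ε R)
    (hdiam : ∀ i, ∀ x ∈ R i, ∀ y ∈ R i, qdist 𝔑.N x y < δ)
    (π : (ℤ → Fin m) → Torus d)
    (hπ : ∀ ω ∈ shiftSpace A R, ∀ x : Torus d,
      (∀ k : ℤ, iterZ A B k x ∈ R (ω k)) ↔ x = π ω)
    (hsurj : ∀ x : Torus d, ∃ ω ∈ shiftSpace A R, π ω = x)
    (hfin : ∀ x : Torus d, {ω ∈ shiftSpace A R | π ω = x}.Finite)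
    (hcomm : ∀ ω ∈ shiftSpace A R, π (shiftMap ω) = tmap A (π ω)) :
    (∀ i : Fin m, (R i ∩ ratPoints d a).Nonempty →
      ∃! j : Fin m, (R j ∩ ratPoints d a).Nonempty ∧ adjacent A R i j) ∧
    ratPoints d a
      = {x : Torus d | ∃ ω ∈ shiftSpace A R,
          π ω = x ∧ ∀ k : ℤ, (R (ω k) ∩ ratPoints d a).Nonempty} := by
  classical
  have hnn := 𝔑.nonneg
  have htri := 𝔑.triangle
  have hcA : 0 < 𝔑.cA := cA_pos hd hBA 𝔑
  have hδle : δ ≤ δ * (1 + 𝔑.cA) := by nlinarith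
  -- unique rational point in each rectangle
  have huniqW : ∀ i : Fin m, ∀ w ∈ R i ∩ ratPoints d a, ∀ w' ∈ R i ∩ ratPoints d a,
      w = w' := by
    intro i w hw w' hw'
    by_contra hne
    have h1 := hδsep w hw.2 w' hw'.2 hne
    have h2 := hdiam i w hw.1 w' hw'.1
    linarith
  -- adjacency determines the image of the rational point
  have hAdjW : ∀ i j : Fin m, adjacent A R i j → ∀ w ∈ R i ∩ ratPoints d a,
      ∀ w' ∈ R j ∩ ratPoints d a, tmap A w = w' := by
    rintro i j ⟨x, hxi, hxj⟩ w hw w' hw'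
    by_contra hne
    have hAw : tmap A w ∈ ratPoints d a := hWinv w hw.2
    have h1 := hδsep _ hAw _ hw'.2 hne
    have h2 : qdist 𝔑.N (tmap A w) (tmap A x) ≤ 𝔑.cA * qdist 𝔑.N w x :=
      qdist_lipschitz hnn hcA 𝔑.boundA w x
    have h3 : qdist 𝔑.N w x < δ := hdiam i w hw.1 x (interior_subset hxi)
    have h4 : qdist 𝔑.N (tmap A x) w' < δ := hdiam j _ (interior_subset hxj) w' hw'.1
    have h5 := qdist_triangle hnn htri (tmap A w) (tmap A x) w'
    nlinarith [mul_lt_mul_of_pos_left h3 hcA]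
  -- codes of points
  have hcode : ∀ ω ∈ shiftSpace A R, ∀ k : ℤ, iterZ A B k (π ω) ∈ R (ω k) :=
    fun ω hω => (hπ ω hω (π ω)).mpr rfl
  -- key coding lemma: all-`𝓡₀` sequences code rational points
  have hkey : ∀ ω ∈ shiftSpace A R, (∀ k : ℤ, (R (ω k) ∩ ratPoints d a).Nonempty) →
      ∀ w₀ ∈ R (ω 0) ∩ ratPoints d a, π ω = w₀ := by
    intro ω hω hall w₀ hw₀
    choose ws hws using hall
    have hstep : ∀ k : ℤ, tmap A (ws k) = ws (k + 1) :=
      fun k => hAdjW (ω k) (ω (k + 1)) (hω k) (ws k) (hws k) (ws (k + 1)) (hws (k + 1))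
    have h0 : ws 0 = w₀ := huniqW (ω 0) _ (hws 0) _ hw₀
    have horb : ∀ k : ℤ, iterZ A B k w₀ = ws k := by
      intro k
      induction k using Int.induction_on with
      | zero => rw [iterZ_zero, h0]
      | succ n ih => rw [iterZ_succ hAB, ih, hstep]
      | pred n ih =>
          have e : (-(n : ℤ) - 1) + 1 = -(n : ℤ) := by ring
          have hs := hstep (-(n : ℤ) - 1)
          rw [e] at hs
          rw [iterZ_pred hAB hBA, e, ih, ← hs, tmap_left_inv hBA]
    have hclose : ∀ k : ℤ, qdist 𝔑.N (iterZ A B k (π ω)) (iterZ A B k w₀) < εc := by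
      intro k
      rw [horb k]
      exact lt_trans (hdiam (ω k) _ (hcode ω hω k) _ (hws k).1) hδεc
    exact hexp (π ω) w₀ hclose
  -- existence of successors and predecessors inside `𝓡₀`
  have hsucc : ∀ i : Fin m, (R i ∩ ratPoints d a).Nonempty →
      ∃ j, (R j ∩ ratPoints d a).Nonempty ∧ adjacent A R i j := by
    rintro i ⟨w, hwR, hwW⟩
    obtain ⟨j, hj1, x, hx1, hx2⟩ := step_point hAB hBA hR.cover hR.proper A B hAB hBA i hwR
    exact ⟨j, ⟨tmap A w, hj1, hWinv w hwW⟩, ⟨x, hx1, hx2⟩⟩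
  have hpred : ∀ i : Fin m, (R i ∩ ratPoints d a).Nonempty →
      ∃ h, (R h ∩ ratPoints d a).Nonempty ∧ adjacent A R h i := by
    rintro i ⟨w, hwR, hwW⟩
    obtain ⟨h, hh1, x, hx1, hx2⟩ := step_point hAB hBA hR.cover hR.proper B A hBA hAB i hwR
    refine ⟨h, ⟨tmap B w, hh1, ratPoints_B hBA ha hWinv w hwW⟩, ⟨tmap B x, hx2, ?_⟩⟩
    show tmap A (tmap B x) ∈ interior (R i)
    rw [tmap_left_inv hAB]
    exact hx1
  -- part (ii)
  have hpart2 : ratPoints d a = {x : Torus d | ∃ ω ∈ shiftSpace A R,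
      π ω = x ∧ ∀ k : ℤ, (R (ω k) ∩ ratPoints d a).Nonempty} := by
    ext w
    constructor
    · intro hw
      obtain ⟨ω, hω, hπω⟩ := hsurj w
      exact ⟨ω, hω, hπω, fun k =>
        ⟨iterZ A B k w, (hπ ω hω w).mpr hπω.symm k, iterZ_ratPoints hAB hBA ha hWinv k hw⟩⟩
    · rintro ⟨ω, hω, rfl, hall⟩
      obtain ⟨w₀, hw₀⟩ := hall 0
      rw [hkey ω hω hall w₀ hw₀]
      exact hw₀.2
  refine ⟨?_, hpart2⟩
  intro i hi
  -- uniqueness of the successor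
  have huniq : ∀ j j' : Fin m,
      ((R j ∩ ratPoints d a).Nonempty ∧ adjacent A R i j) →
      ((R j' ∩ ratPoints d a).Nonempty ∧ adjacent A R i j') → j = j' := by
    rintro j j' ⟨hjW, hjadj⟩ ⟨hj'W, hj'adj⟩
    by_contra hne
    have hsucc' : ∀ g : {g : Fin m // (R g ∩ ratPoints d a).Nonempty},
        ∃ g' : {g : Fin m // (R g ∩ ratPoints d a).Nonempty}, adjacent A R g.1 g'.1 := by
      intro g
      obtain ⟨j1, h1, h2⟩ := hsucc g.1 g.2
      exact ⟨⟨j1, h1⟩, h2⟩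
    have hpred' : ∀ g : {g : Fin m // (R g ∩ ratPoints d a).Nonempty},
        ∃ g' : {g : Fin m // (R g ∩ ratPoints d a).Nonempty}, adjacent A R g'.1 g.1 := by
      intro g
      obtain ⟨j1, h1, h2⟩ := hpred g.1 g.2
      exact ⟨⟨j1, h1⟩, h2⟩
    choose σ hσ using hsucc'
    choose p hp using hpred'
    obtain ⟨ω1, hω1adj, hω1R, hω10, hω11⟩ := build_path (adjacent A R)
      (fun v => (R v ∩ ratPoints d a).Nonempty) Subtype.val (fun g => g.2) σ p hσ hp
      ⟨i, hi⟩ ⟨j, hjW⟩ hjadj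
    obtain ⟨ω2, hω2adj, hω2R, hω20, hω21⟩ := build_path (adjacent A R)
      (fun v => (R v ∩ ratPoints d a).Nonempty) Subtype.val (fun g => g.2) σ p hσ hp
      ⟨i, hi⟩ ⟨j', hj'W⟩ hj'adj
    have hω1Ω : ω1 ∈ shiftSpace A R := hω1adj
    have hω2Ω : ω2 ∈ shiftSpace A R := hω2adj
    have hω10' : ω1 0 = i := hω10
    have hω11' : ω1 1 = j := hω11
    have hω20' : ω2 0 = i := hω20
    have hω21' : ω2 1 = j' := hω21
    obtain ⟨wi, hwiR, hwiW⟩ := hi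
    obtain ⟨P, hPpos, hPw⟩ := exists_period hBA ha hWinv hwiW
    have hcommN : ∀ n : ℕ, ∀ ω ∈ shiftSpace A R,
        π (shiftMap^[n] ω) = (⇑(tmap A))^[n] (π ω) := by
      intro n
      induction n with
      | zero => intro ω _; rfl
      | succ n ih =>
          intro ω hω
          rw [Function.iterate_succ_apply, ih _ (shiftMap_mem hω), hcomm ω hω,
            ← Function.iterate_succ_apply]
    have hmemF : ∀ ω, ω ∈ shiftSpace A R →
        (∀ k : ℤ, (R (ω k) ∩ ratPoints d a).Nonempty) → ω 0 = i → π ω = wi := by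
      intro ω hω hall h0
      apply hkey ω hω hall wi
      rw [h0]
      exact ⟨hwiR, hwiW⟩
    have hFfin : {ω : ℤ → Fin m | ω ∈ shiftSpace A R ∧ π ω = wi ∧
        ∀ k : ℤ, (R (ω k) ∩ ratPoints d a).Nonempty}.Finite :=
      (hfin wi).subset (fun ω h => ⟨h.1, h.2.1⟩)
    have hΘ : ∀ ω, ω ∈ shiftSpace A R ∧ π ω = wi ∧
        (∀ k : ℤ, (R (ω k) ∩ ratPoints d a).Nonempty) →
        shiftMap^[P] ω ∈ shiftSpace A R ∧ π (shiftMap^[P] ω) = wi ∧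
        ∀ k : ℤ, (R ((shiftMap^[P] ω) k) ∩ ratPoints d a).Nonempty := by
      rintro ω ⟨h1, h2, h3⟩
      refine ⟨shiftMap_iterate_mem h1 P, ?_, fun k => ?_⟩
      · rw [hcommN P ω h1, h2, hPw]
      · rw [shiftMap_iterate_apply]; exact h3 (k + P)
    have hω1F : ω1 ∈ shiftSpace A R ∧ π ω1 = wi ∧
        ∀ k : ℤ, (R (ω1 k) ∩ ratPoints d a).Nonempty :=
      ⟨hω1Ω, hmemF ω1 hω1Ω hω1R hω10, hω1R⟩
    have hgF : ∀ n : ℕ, (shiftMap^[n * P] ω1) ∈ {ω : ℤ → Fin m | ω ∈ shiftSpace A R ∧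
        π ω = wi ∧ ∀ k : ℤ, (R (ω k) ∩ ratPoints d a).Nonempty} := by
      intro n
      induction n with
      | zero =>
          simp only [Nat.zero_mul, Function.iterate_zero_apply]
          exact hω1F
      | succ n ih =>
          have e : (n + 1) * P = P + n * P := by ring
          rw [e, Function.iterate_add_apply]
          exact hΘ _ ih
    obtain ⟨n1, -, n2, -, hnne, hneq⟩ := Set.infinite_univ.exists_ne_map_eq_of_mapsTo
      (f := fun n : ℕ => shiftMap^[n * P] ω1) (fun n _ => hgF n) hFfin
    have hkeyT : ∀ a' b' : ℕ, a' < b' → (shiftMap^[a' * P] ω1 = shiftMap^[b' * P] ω1) →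
        ∃ T : ℕ, 1 ≤ T ∧ shiftMap^[T] ω1 = ω1 := by
      intro a' b' hab he
      refine ⟨(b' - a') * P, Nat.mul_pos (by omega) hPpos, ?_⟩
      apply shiftMap_injective.iterate (a' * P)
      rw [← Function.iterate_add_apply]
      have h1 : a' * P ≤ b' * P := Nat.mul_le_mul_right P (le_of_lt hab)
      have h2 : (b' - a') * P = b' * P - a' * P := Nat.sub_mul b' a' P
      have e : a' * P + (b' - a') * P = b' * P := by omega
      rw [e]
      exact he.symm
    obtain ⟨T, hT1, hTper⟩ : ∃ T : ℕ, 1 ≤ T ∧ shiftMap^[T] ω1 = ω1 := by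
      rcases hnne.lt_or_gt with h | h
      · exact hkeyT n1 n2 h hneq
      · exact hkeyT n2 n1 h hneq.symm
    have hper1 : ∀ k : ℤ, ω1 (k + (T : ℤ)) = ω1 k := by
      intro k
      have hcf := congrFun hTper k
      rw [shiftMap_iterate_apply] at hcf
      exact hcf
    have hperN : ∀ n : ℕ, ∀ k : ℤ, ω1 (k + ((n * T : ℕ) : ℤ)) = ω1 k := by
      intro n
      induction n with
      | zero => intro k; simp
      | succ n ih =>
          intro k
          have e : (k + (((n + 1) * T : ℕ) : ℤ)) = (k + ((n * T : ℕ) : ℤ)) + (T : ℤ) := by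
            push_cast; ring
          rw [e, hper1, ih]
    -- the spliced family of codes of `wi`
    set fam : ℕ → ℤ → Fin m := fun n k =>
      if k ≤ ((n * T : ℕ) : ℤ) then ω1 k else ω2 (k - ((n * T : ℕ) : ℤ)) with hfam
    have hfamΩ : ∀ n, fam n ∈ shiftSpace A R := by
      intro n k
      by_cases h1 : k + 1 ≤ ((n * T : ℕ) : ℤ)
      · have h2 : k ≤ ((n * T : ℕ) : ℤ) := by omega
        simp only [hfam, if_pos h1, if_pos h2]
        exact hω1adj k
      · by_cases h2 : k ≤ ((n * T : ℕ) : ℤ)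
        · have hk : k = ((n * T : ℕ) : ℤ) := by omega
          simp only [hfam, if_pos h2, if_neg h1]
          have e2 : k + 1 - ((n * T : ℕ) : ℤ) = 1 := by omega
          rw [e2]
          have e3 : ω1 k = i := by
            calc ω1 k = ω1 (0 + ((n * T : ℕ) : ℤ)) := by rw [hk, zero_add]
              _ = ω1 0 := hperN n 0
              _ = i := hω10'
          rw [e3, ← hω20']
          simpa using hω2adj 0
        · simp only [hfam, if_neg h1, if_neg h2]
          have e : k + 1 - ((n * T : ℕ) : ℤ) = (k - ((n * T : ℕ) : ℤ)) + 1 := by ring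
          rw [e]
          exact hω2adj _
    have hfamR : ∀ n, ∀ k : ℤ, (R (fam n k) ∩ ratPoints d a).Nonempty := by
      intro n k
      by_cases h : k ≤ ((n * T : ℕ) : ℤ)
      · simp only [hfam, if_pos h]; exact hω1R k
      · simp only [hfam, if_neg h]; exact hω2R _
    have hfam0 : ∀ n, fam n 0 = i := by
      intro n
      have h : (0 : ℤ) ≤ ((n * T : ℕ) : ℤ) := by exact_mod_cast Nat.zero_le _
      simp only [hfam, if_pos h]
      exact hω10'
    have hfamπ : ∀ n, π (fam n) = wi := fun n => hmemF _ (hfamΩ n) (hfamR n) (hfam0 n)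
    have hdist : ∀ n n' : ℕ, n < n' → fam n ≠ fam n' := by
      intro n n' hlt heq
      have h1 : fam n (((n * T : ℕ) : ℤ) + 1) = j' := by
        have hcond : ¬ (((n * T : ℕ) : ℤ) + 1 ≤ ((n * T : ℕ) : ℤ)) := by omega
        simp only [hfam, if_neg hcond]
        have e : ((n * T : ℕ) : ℤ) + 1 - ((n * T : ℕ) : ℤ) = 1 := by ring
        rw [e]
        exact hω21'
      have h2 : fam n' (((n * T : ℕ) : ℤ) + 1) = j := by
        have hle : n * T + 1 ≤ n' * T := by nlinarith
        have hcond : (((n * T : ℕ) : ℤ) + 1) ≤ ((n' * T : ℕ) : ℤ) := by exact_mod_cast hle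
        simp only [hfam, if_pos hcond]
        have e : ((n * T : ℕ) : ℤ) + 1 = 1 + ((n * T : ℕ) : ℤ) := by ring
        rw [e, hperN n 1]
        exact hω11'
      rw [heq] at h1
      exact hne (h2.symm.trans h1)
    have hinf : {ω : ℤ → Fin m | ω ∈ shiftSpace A R ∧ π ω = wi}.Infinite := by
      apply Set.infinite_of_injective_forall_mem (f := fam)
      · intro n n' h
        by_contra hne'
        rcases Ne.lt_or_gt hne' with hlt | hlt
        · exact hdist n n' hlt h
        · exact hdist n' n hlt h.symm
      · exact fun n => ⟨hfamΩ n, hfamπ n⟩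
    exact hinf ((hfin wi).subset (fun ω h => h))
  obtain ⟨j0, hj0⟩ := hsucc i hi
  exact ⟨j0, hj0, fun j' hj' => huniq j' j0 hj' hj0⟩

end
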